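/- arXiv:1506.02284 — 7 statements merged into one kernel-verified Lean document; each statement's English description precedes it below -/
import Mathlib

section
/- Let θ ∈ ℝ with θ not an integer multiple of 2π, and for i ∈ {1, −1} let f_i be the rotation of angle θ about the point (i, 0). Let p = (x, y) ∈ ℝ² with y ≠ 0, and set X(x, y) = 2xy·cos θ + (x² − y² − 1)·sin θ and Y(x, y) = (1 − cos θ)·(x + y·cot(θ/2) − 1)·(x + y·cot(θ/2) + 1), where cot(θ/2) = cos(θ/2)/sin(θ/2). Then the point z = (X(x, y)/(2y), Y(x, y)/(2y)) is equidistant from the three points p, f₁(p) and f₋₁(p), and z is the unique point of ℝ² equidistant from these three points (i.e., z is their circumcenter). -/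
open Real

/-- The point of the Euclidean plane with coordinates `(a, b)`. -/
noncomputable def pt (a b : ℝ) : EuclideanSpace ℝ (Fin 2) :=
  (WithLp.equiv 2 (Fin 2 → ℝ)).symm ![a, b]

/-- The rotation of angle `θ` about the point `c`. -/
noncomputable def rot (θ : ℝ) (c p : EuclideanSpace ℝ (Fin 2)) : EuclideanSpace ℝ (Fin 2) :=
  pt (c 0 + ((p 0 - c 0) * Real.cos θ - (p 1 - c 1) * Real.sin θ))
     (c 1 + ((p 0 - c 0) * Real.sin θ + (p 1 - c 1) * Real.cos θ))

lemma pt_apply0 (a b : ℝ) : pt a b 0 = a := rfl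

lemma pt_apply1 (a b : ℝ) : pt a b 1 = b := rfl

lemma eq_pt (v : EuclideanSpace ℝ (Fin 2)) : v = pt (v 0) (v 1) := by
  ext i
  fin_cases i <;> rfl

lemma dist_pt (a b c d : ℝ) :
    dist (pt a b) (pt c d) = Real.sqrt ((a - c) ^ 2 + (b - d) ^ 2) := by
  rw [EuclideanSpace.dist_eq, Fin.sum_univ_two]
  simp [pt_apply0, pt_apply1, Real.dist_eq, sq_abs]

lemma dist_pt_eq_iff (a b c d a' b' c' d' : ℝ) :
    dist (pt a b) (pt c d) = dist (pt a' b') (pt c' d') ↔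
      (a - c) ^ 2 + (b - d) ^ 2 = (a' - c') ^ 2 + (b' - d') ^ 2 := by
  rw [dist_pt, dist_pt, Real.sqrt_inj (by positivity) (by positivity)]

theorem stmt0 (θ : ℝ) (hθ : ∀ k : ℤ, θ ≠ k * (2 * π))
    (x y : ℝ) (hy : y ≠ 0)
    (p : EuclideanSpace ℝ (Fin 2)) (hp : p = pt x y)
    (X Y : ℝ)
    (hX : X = 2 * x * y * cos θ + (x ^ 2 - y ^ 2 - 1) * sin θ)
    (hY : Y = (1 - cos θ) * (x + y * (cos (θ / 2) / sin (θ / 2)) - 1) *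
      (x + y * (cos (θ / 2) / sin (θ / 2)) + 1))
    (z : EuclideanSpace ℝ (Fin 2)) (hz : z = pt (X / (2 * y)) (Y / (2 * y))) :
    (dist z p = dist z (rot θ (pt 1 0) p) ∧ dist z p = dist z (rot θ (pt (-1) 0) p)) ∧
      ∀ w : EuclideanSpace ℝ (Fin 2),
        (dist w p = dist w (rot θ (pt 1 0) p) ∧ dist w p = dist w (rot θ (pt (-1) 0) p)) →
          w = z := by
  set s := Real.sin (θ / 2) with hs_def
  set c := Real.cos (θ / 2) with hc_def
  have hs : s ≠ 0 := by
    rw [hs_def]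
    intro h
    rcases Real.sin_eq_zero_iff.mp h with ⟨k, hk⟩
    exact hθ k (by linarith)
  have hpyth : s ^ 2 + c ^ 2 = 1 := Real.sin_sq_add_cos_sq _
  have hcos : Real.cos θ = 1 - 2 * s ^ 2 := by
    have h2 := Real.cos_two_mul (θ / 2)
    rw [← hc_def] at h2
    rw [show θ = 2 * (θ / 2) by ring, h2]
    linarith [hpyth]
  have hsin : Real.sin θ = 2 * s * c := by
    have := Real.sin_two_mul (θ / 2)
    rw [← hs_def, ← hc_def] at this
    rw [show θ = 2 * (θ / 2) by ring, this]
  -- coordinates of z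
  have hz0 : 2 * y * (z 0) = 2 * x * y * (1 - 2 * s ^ 2) + (x ^ 2 - y ^ 2 - 1) * (2 * s * c) := by
    rw [hz, pt_apply0, hX, hcos, hsin]
    field_simp
  have hz1 : 2 * y * (z 1) = 2 * (s * x + y * c) ^ 2 - 2 * s ^ 2 := by
    rw [hz, pt_apply1, hY, hcos]
    field_simp
    ring
  -- coordinates of the rotated points
  have hq1 : rot θ (pt 1 0) p =
      pt (1 + ((x - 1) * (1 - 2 * s ^ 2) - y * (2 * s * c)))
        ((x - 1) * (2 * s * c) + y * (1 - 2 * s ^ 2)) := by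
    rw [hp]
    unfold rot
    rw [pt_apply0, pt_apply1, pt_apply0, pt_apply1, hcos, hsin]
    exact congrArg₂ pt (by ring) (by ring)
  have hq2 : rot θ (pt (-1) 0) p =
      pt (-1 + ((x + 1) * (1 - 2 * s ^ 2) - y * (2 * s * c)))
        ((x + 1) * (2 * s * c) + y * (1 - 2 * s ^ 2)) := by
    rw [hp]
    unfold rot
    rw [pt_apply0, pt_apply1, pt_apply0, pt_apply1, hcos, hsin]
    exact congrArg₂ pt (by ring) (by ring)
  have h4y2 : ((2 * y) ^ 2 : ℝ) ≠ 0 := pow_ne_zero _ (by simpa using hy)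
  -- squared-distance identities for z
  have hze1 : (z 0 - x) ^ 2 + (z 1 - y) ^ 2 =
      (z 0 - (1 + ((x - 1) * (1 - 2 * s ^ 2) - y * (2 * s * c)))) ^ 2 +
        (z 1 - ((x - 1) * (2 * s * c) + y * (1 - 2 * s ^ 2))) ^ 2 := by
    apply mul_left_cancel₀ h4y2
    linear_combination (-8*s*c*y^2 + 8*s^2*y - 8*s^2*x*y) * hz0 +
      (-8*s*c*y + 8*s*c*x*y - 8*s^2*y^2) * hz1 +
      (-16*s*c*y^3 + 16*s*c*x*y^3 - 16*s^2*y^4) * hpyth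
  have hze2 : (z 0 - x) ^ 2 + (z 1 - y) ^ 2 =
      (z 0 - (-1 + ((x + 1) * (1 - 2 * s ^ 2) - y * (2 * s * c)))) ^ 2 +
        (z 1 - ((x + 1) * (2 * s * c) + y * (1 - 2 * s ^ 2))) ^ 2 := by
    apply mul_left_cancel₀ h4y2
    linear_combination (-8*s*c*y^2 - 8*s^2*y - 8*s^2*x*y) * hz0 +
      (8*s*c*y + 8*s*c*x*y - 8*s^2*y^2) * hz1 +
      (16*s*c*y^3 + 16*s*c*x*y^3 - 16*s^2*y^4) * hpyth
  have hd1 : dist z p = dist z (rot θ (pt 1 0) p) := by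
    rw [hq1, hp, eq_pt z, dist_pt_eq_iff]
    exact hze1
  have hd2 : dist z p = dist z (rot θ (pt (-1) 0) p) := by
    rw [hq2, hp, eq_pt z, dist_pt_eq_iff]
    exact hze2
  refine ⟨⟨hd1, hd2⟩, ?_⟩
  intro w ⟨hw1', hw2'⟩
  rw [hq1, hp, eq_pt w, dist_pt_eq_iff] at hw1'
  rw [hq2, hp, eq_pt w, dist_pt_eq_iff] at hw2'
  have hD : (32 * s ^ 2 * y : ℝ) ≠ 0 := by
    have h2 := pow_ne_zero 2 hs
    positivity
  have h0 : w 0 = z 0 := by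
    apply mul_left_cancel₀ hD
    linear_combination (-(4*s*c + 4*s*c*x - 4*s^2*y)) * hw1' +
      (-4*s*c + 4*s*c*x - 4*s^2*y) * hw2' +
      (4*s*c + 4*s*c*x - 4*s^2*y) * hze1 +
      (-(-4*s*c + 4*s*c*x - 4*s^2*y)) * hze2 +
      (-(32*s^2*y) * (w 0 - z 0)) * hpyth
  have h1 : w 1 = z 1 := by
    apply mul_left_cancel₀ hD
    linear_combination (-4*s*c*y - 4*s^2 - 4*s^2*x) * hw1' +
      (-(-4*s*c*y + 4*s^2 - 4*s^2*x)) * hw2' +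
      (-(-4*s*c*y - 4*s^2 - 4*s^2*x)) * hze1 +
      (-4*s*c*y + 4*s^2 - 4*s^2*x) * hze2 +
      (-(32*s^2*y) * (w 1 - z 1)) * hpyth
  rw [eq_pt w, h0, h1, ← eq_pt z]
end

section
/- Let θ ∈ ℝ with θ not an integer multiple of 2π, let c₁, c₂ ∈ ℝ² be distinct points, and for i ∈ {1, 2} let f_i be the rotation of angle θ about c_i (the same angle for both). Then for every p ∈ ℝ², the three points p, f₁(p), f₂(p) are collinear if and only if p lies on the line through c₁ and c₂ (equivalently, p, c₁, c₂ are collinear). -/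
open Real

lemma collinear_triple_iff_det (a b c : EuclideanSpace ℝ (Fin 2)) :
    Collinear ℝ ({a, b, c} : Set (EuclideanSpace ℝ (Fin 2))) ↔
      (b 0 - a 0) * (c 1 - a 1) - (b 1 - a 1) * (c 0 - a 0) = 0 := by
  rw [collinear_iff_of_mem (Set.mem_insert a _)]
  constructor
  · rintro ⟨v, hv⟩
    obtain ⟨rb, hb⟩ := hv b (by simp)
    obtain ⟨rc, hc⟩ := hv c (by simp)
    have hb0 : b 0 = rb * v 0 + a 0 := by rw [hb]; rfl
    have hb1 : b 1 = rb * v 1 + a 1 := by rw [hb]; rfl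
    have hc0 : c 0 = rc * v 0 + a 0 := by rw [hc]; rfl
    have hc1 : c 1 = rc * v 1 + a 1 := by rw [hc]; rfl
    rw [hb0, hb1, hc0, hc1]; ring
  · intro hdet
    by_cases hb0 : b 0 = a 0
    · by_cases hb1 : b 1 = a 1
      · -- b = a, use v = c - a
        refine ⟨c - a, ?_⟩
        rintro q hq
        rcases hq with rfl | rfl | rfl
        · exact ⟨0, by simp⟩
        · refine ⟨0, ?_⟩
          simp only [zero_smul, zero_vadd]
          ext i
          fin_cases i
          · exact hb0
          · exact hb1
        · refine ⟨1, ?_⟩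
          ext i
          fin_cases i <;> simp [vadd_eq_add]
      · -- b 1 ≠ a 1, v = b - a, v 1 ≠ 0
        refine ⟨b - a, ?_⟩
        rintro q hq
        rcases hq with rfl | rfl | rfl
        · exact ⟨0, by simp⟩
        · refine ⟨1, ?_⟩
          ext i
          fin_cases i <;> simp [vadd_eq_add]
        · refine ⟨(q 1 - a 1) / (b 1 - a 1), ?_⟩
          have h1 : b 1 - a 1 ≠ 0 := sub_ne_zero.mpr hb1
          ext i
          fin_cases i
          · show q 0 = (q 1 - a 1) / (b 1 - a 1) * (b 0 - a 0) + a 0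
            rw [hb0] at hdet ⊢
            have hz : (b 1 - a 1) * (q 0 - a 0) = 0 := by linarith [hdet]
            rcases mul_eq_zero.mp hz with h | h
            · exact absurd h h1
            · have hq0 : q 0 = a 0 := by linarith
              rw [hq0]; ring
          · show q 1 = (q 1 - a 1) / (b 1 - a 1) * (b 1 - a 1) + a 1
            field_simp
            ring
    · -- b 0 ≠ a 0, v = b - a
      refine ⟨b - a, ?_⟩
      rintro q hq
      have h0 : b 0 - a 0 ≠ 0 := sub_ne_zero.mpr hb0
      rcases hq with rfl | rfl | rfl
      · exact ⟨0, by simp⟩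
      · refine ⟨1, ?_⟩
        ext i
        fin_cases i <;> simp [vadd_eq_add]
      · refine ⟨(q 0 - a 0) / (b 0 - a 0), ?_⟩
        ext i
        fin_cases i
        · show q 0 = (q 0 - a 0) / (b 0 - a 0) * (b 0 - a 0) + a 0
          field_simp
          ring
        · show q 1 = (q 0 - a 0) / (b 0 - a 0) * (b 1 - a 1) + a 1
          have hk : (b 0 - a 0) * (q 1 - a 1) = (b 1 - a 1) * (q 0 - a 0) := by linarith [hdet]
          field_simp
          linarith [hk]

theorem stmt1 (θ : ℝ) (hθ : ∀ k : ℤ, θ ≠ k * (2 * π))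
    (c₁ c₂ : EuclideanSpace ℝ (Fin 2)) (hc : c₁ ≠ c₂)
    (p : EuclideanSpace ℝ (Fin 2)) :
    Collinear ℝ {p, rot θ c₁ p, rot θ c₂ p} ↔ Collinear ℝ {p, c₁, c₂} := by
  have hcos : Real.cos θ ≠ 1 := by
    intro h
    obtain ⟨n, hn⟩ := Real.cos_eq_one_iff θ |>.mp h
    exact hθ n hn.symm
  have hne : (2 : ℝ) - 2 * Real.cos θ ≠ 0 := by
    intro h
    apply hcos
    linarith
  rw [collinear_triple_iff_det, collinear_triple_iff_det]
  have hrot : ∀ (c : EuclideanSpace ℝ (Fin 2)),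
      rot θ c p 0 = c 0 + ((p 0 - c 0) * Real.cos θ - (p 1 - c 1) * Real.sin θ) ∧
      rot θ c p 1 = c 1 + ((p 0 - c 0) * Real.sin θ + (p 1 - c 1) * Real.cos θ) := by
    intro c
    constructor <;> simp [rot, pt, WithLp.equiv_symm_apply]
  obtain ⟨h10, h11⟩ := hrot c₁
  obtain ⟨h20, h21⟩ := hrot c₂
  rw [h10, h11, h20, h21]
  have key : (c₁ 0 + ((p 0 - c₁ 0) * Real.cos θ - (p 1 - c₁ 1) * Real.sin θ) - p 0) *
        (c₂ 1 + ((p 0 - c₂ 0) * Real.sin θ + (p 1 - c₂ 1) * Real.cos θ) - p 1) -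
      (c₁ 1 + ((p 0 - c₁ 0) * Real.sin θ + (p 1 - c₁ 1) * Real.cos θ) - p 1) *
        (c₂ 0 + ((p 0 - c₂ 0) * Real.cos θ - (p 1 - c₂ 1) * Real.sin θ) - p 0) =
      (2 - 2 * Real.cos θ) * ((c₁ 0 - p 0) * (c₂ 1 - p 1) - (c₁ 1 - p 1) * (c₂ 0 - p 0)) := by
    linear_combination ((p 0 - c₁ 0) * (p 1 - c₂ 1) - (p 1 - c₁ 1) * (p 0 - c₂ 0)) *
      (Real.sin_sq_add_cos_sq θ)
  rw [key, mul_eq_zero]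
  simp [hne]
end

section
/- Let θ ∈ ℝ with sin θ ≠ 0. Set X(x, y) = 2xy·cos θ + (x² − y² − 1)·sin θ, Y(x, y) = (1 − cos θ)·(x + y·cot(θ/2) − 1)·(x + y·cot(θ/2) + 1) with cot(θ/2) = cos(θ/2)/sin(θ/2), and for y ≠ 0 define G(x, y) = (X(x, y)/(2y), Y(x, y)/(2y)). Then the two points p₁ = (cos θ, −sin θ) and p₂ = (−cos θ − 2, sin θ) are distinct, both have nonzero second coordinate, and G(p₁) = G(p₂) = (1, 0). In particular, G is not injective on its domain. -/
open Real

lemma pt0 (a b : ℝ) : (pt a b) 0 = a := rfl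
lemma pt1 (a b : ℝ) : (pt a b) 1 = b := rfl

lemma pt_congr {a b c d : ℝ} (ha : a = c) (hb : b = d) : pt a b = pt c d := by
  rw [ha, hb]

theorem stmt3 (θ : ℝ) (hθ : sin θ ≠ 0)
    (G : EuclideanSpace ℝ (Fin 2) → EuclideanSpace ℝ (Fin 2))
    (hG : ∀ p : EuclideanSpace ℝ (Fin 2), p 1 ≠ 0 → G p =
      pt ((2 * p 0 * p 1 * cos θ + ((p 0) ^ 2 - (p 1) ^ 2 - 1) * sin θ) / (2 * p 1))
         (((1 - cos θ) * (p 0 + p 1 * (cos (θ / 2) / sin (θ / 2)) - 1) *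
            (p 0 + p 1 * (cos (θ / 2) / sin (θ / 2)) + 1)) / (2 * p 1))) :
    pt (cos θ) (-sin θ) ≠ pt (-cos θ - 2) (sin θ) ∧
    (pt (cos θ) (-sin θ)) 1 ≠ 0 ∧ (pt (-cos θ - 2) (sin θ)) 1 ≠ 0 ∧
    G (pt (cos θ) (-sin θ)) = pt 1 0 ∧ G (pt (-cos θ - 2) (sin θ)) = pt 1 0 ∧
    ¬ Set.InjOn G {p : EuclideanSpace ℝ (Fin 2) | p 1 ≠ 0} := by
  have hsin : sin θ = 2 * sin (θ / 2) * cos (θ / 2) := by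
    rw [← Real.sin_two_mul]; ring_nf
  have hcos : cos θ = 2 * cos (θ / 2) ^ 2 - 1 := by
    rw [← Real.cos_two_mul]; ring_nf
  have hs2 : sin (θ / 2) ≠ 0 := fun h => hθ (by rw [hsin, h]; ring)
  have hpyth : sin θ ^ 2 + cos θ ^ 2 = 1 := Real.sin_sq_add_cos_sq θ
  have hne : pt (cos θ) (-sin θ) ≠ pt (-cos θ - 2) (sin θ) := by
    intro h
    have : (pt (cos θ) (-sin θ)) 1 = (pt (-cos θ - 2) (sin θ)) 1 := by rw [h]
    rw [pt1, pt1] at this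
    apply hθ; linarith
  have h1 : (pt (cos θ) (-sin θ)) 1 ≠ 0 := by rw [pt1]; exact neg_ne_zero.mpr hθ
  have h2 : (pt (-cos θ - 2) (sin θ)) 1 ≠ 0 := by rw [pt1]; exact hθ
  have hfac1 : cos θ + (-sin θ) * (cos (θ / 2) / sin (θ / 2)) + 1 = 0 := by
    field_simp
    linear_combination sin (θ / 2) * hcos - cos (θ / 2) * hsin
  have hfac2 : (-cos θ - 2) + (sin θ) * (cos (θ / 2) / sin (θ / 2)) + 1 = 0 := by
    field_simp
    linear_combination cos (θ / 2) * hsin - sin (θ / 2) * hcos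
  have hG1 : G (pt (cos θ) (-sin θ)) = pt 1 0 := by
    rw [hG _ h1, pt0, pt1]
    apply pt_congr
    · rw [div_eq_iff (by simpa using hθ)]
      linear_combination (- sin θ) * hpyth
    · rw [hfac1, mul_zero, zero_div]
  have hG2 : G (pt (-cos θ - 2) (sin θ)) = pt 1 0 := by
    rw [hG _ h2, pt0, pt1]
    apply pt_congr
    · rw [div_eq_iff (by simpa using hθ)]
      linear_combination (- sin θ) * hpyth
    · rw [hfac2, mul_zero, zero_div]
  refine ⟨hne, h1, h2, hG1, hG2, fun hinj => ?_⟩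
  exact hne (hinj h1 h2 (hG1.trans hG2.symm))
end

section
/- Let U ⊆ ℝ² be open and connected, let C′ ⊆ ℝ² be closed, let G : U → ℝ² be continuous, and let G′ be a map defined on ℝ² ∖ C′ with values in ℝ². Assume: (i) for every a ∈ C′, ‖G′(q)‖ tends to infinity as q tends to a with q ∉ C′; (ii) G′(G(x)) = x for every x ∈ U with G(x) ∉ C′; (iii) there exists x₀ ∈ U with G(x₀) ∉ C′. Then G(x) ∉ C′ for every x ∈ U, i.e., the image of G is disjoint from C′. -/
open Filter Set Topology

theorem stmt6 (U C' : Set (EuclideanSpace ℝ (Fin 2)))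
    (hU : IsOpen U) (hUconn : IsConnected U) (hC' : IsClosed C')
    (G G' : EuclideanSpace ℝ (Fin 2) → EuclideanSpace ℝ (Fin 2))
    (hGcont : ContinuousOn G U)
    (hblow : ∀ a ∈ C',
      Filter.Tendsto (fun q => ‖G' q‖) (nhdsWithin a C'ᶜ) Filter.atTop)
    (hinv : ∀ x ∈ U, G x ∉ C' → G' (G x) = x)
    (hx0 : ∃ x₀ ∈ U, G x₀ ∉ C') :
    ∀ x ∈ U, G x ∉ C' := by
  set T : Set (EuclideanSpace ℝ (Fin 2)) := U ∩ G ⁻¹' C'ᶜ with hT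
  have hTopen : IsOpen T := hGcont.isOpen_inter_preimage hU hC'.isOpen_compl
  have key : closure T ∩ U ⊆ T := by
    rintro x ⟨hxcl, hxU⟩
    refine ⟨hxU, ?_⟩
    by_contra hGx
    simp only [mem_preimage, mem_compl_iff, not_not] at hGx
    have hne : (𝓝[T] x).NeBot := mem_closure_iff_nhdsWithin_neBot.1 hxcl
    -- G tends to G x within T
    have hGt : Tendsto G (𝓝[T] x) (𝓝[C'ᶜ] (G x)) := by
      refine tendsto_nhdsWithin_iff.2 ⟨?_, ?_⟩
      · exact (hGcont x hxU).tendsto.mono_left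
          (nhdsWithin_mono x inter_subset_left)
      · exact eventually_nhdsWithin_of_forall fun y hy => hy.2
    have h1 : Tendsto (fun y => ‖G' (G y)‖) (𝓝[T] x) atTop :=
      (hblow (G x) hGx).comp hGt
    have h2 : Tendsto (fun y => ‖(y : EuclideanSpace ℝ (Fin 2))‖) (𝓝[T] x) (𝓝 ‖x‖) :=
      (continuous_norm.tendsto x).mono_left nhdsWithin_le_nhds
    have h3 : Tendsto (fun y => ‖(y : EuclideanSpace ℝ (Fin 2))‖) (𝓝[T] x) atTop := by
      refine h1.congr' ?_
      filter_upwards [self_mem_nhdsWithin] with y hy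
      rw [hinv y hy.1 hy.2]
    exact not_tendsto_atTop_of_tendsto_nhds h2 h3
  obtain ⟨x₀, hx₀U, hx₀⟩ := hx0
  have : U ⊆ T :=
    hUconn.isPreconnected.subset_of_closure_inter_subset hTopen
      ⟨x₀, hx₀U, hx₀U, hx₀⟩ key
  exact fun x hx => (this hx).2
end

section
/- Let X be a nonempty compact metric space and suppose f : X → X is a map such that for every p ∈ X, f(p) is an antipode of p and is the only antipode of p (i.e., F_p = {f(p)}). Then f is continuous. -/
/-- `q` is an antipode (farthest point) of `p`. -/
def IsAntipode {X : Type*} [PseudoMetricSpace X] (p q : X) : Prop :=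
  ∀ r : X, dist p r ≤ dist p q

theorem stmt8 {X : Type*} [MetricSpace X] [Nonempty X] [CompactSpace X]
    (f : X → X)
    (hf : ∀ p : X, IsAntipode p (f p) ∧ ∀ q : X, IsAntipode p q → q = f p) :
    Continuous f := by
  have key : ∀ (x : X) (u : ℕ → X), Filter.Tendsto u Filter.atTop (nhds x) →
      Filter.Tendsto (f ∘ u) Filter.atTop (nhds (f x)) := by
    intro x u hu
    apply Filter.tendsto_of_subseq_tendsto
    intro ns hns
    obtain ⟨q, -, φ, hφ, hq⟩ := isCompact_univ.tendsto_subseq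
      (x := fun n => f (u (ns n))) (fun n => Set.mem_univ _)
    refine ⟨φ, ?_⟩
    have hx : Filter.Tendsto (fun n => u (ns (φ n))) Filter.atTop (nhds x) :=
      hu.comp (hns.comp hφ.tendsto_atTop)
    have hant : IsAntipode x q := by
      intro r
      have h1 : Filter.Tendsto (fun n => dist (u (ns (φ n))) r) Filter.atTop
          (nhds (dist x r)) := hx.dist tendsto_const_nhds
      have h2 : Filter.Tendsto (fun n => dist (u (ns (φ n))) (f (u (ns (φ n)))))
          Filter.atTop (nhds (dist x q)) := hx.dist hq
      exact le_of_tendsto_of_tendsto' h1 h2 (fun n => (hf _).1 r)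
    have hq' : q = f x := (hf x).2 q hant
    rw [hq'] at hq
    exact hq
  exact SeqContinuous.continuous (fun {u x} hu => key x u hu)
end

section
/- Let a, b > 0, let L be the additive subgroup of the Euclidean plane ℝ² generated by (a, 0) and (0, b), and let T = ℝ²/L be the flat rectangular torus with the quotient norm. Set ω = π(a/2, b/2) ∈ T. Then for every x ∈ T, the point x + ω is an antipode of x, it is the unique antipode of x, and dist(x, x + ω) = √(a² + b²)/2. In particular the radius function of T is constant. -/
lemma norm_eq_sqrt (w : EuclideanSpace ℝ (Fin 2)) :
    ‖w‖ = Real.sqrt ((w 0)^2 + (w 1)^2) := by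
  rw [EuclideanSpace.norm_eq]
  simp [Fin.sum_univ_two, sq_abs]

lemma sqrt_half (a b : ℝ) : Real.sqrt ((a/2)^2 + (b/2)^2) = Real.sqrt (a^2 + b^2) / 2 := by
  rw [show (a/2)^2 + (b/2)^2 = (a^2+b^2)/4 by ring,
    show (4:ℝ) = 2^2 by norm_num, Real.sqrt_div (by positivity),
    Real.sqrt_sq (by norm_num : (0:ℝ) ≤ 2)]

-- distance from a/2 to multiples of a
lemma half_le (a : ℝ) (ha : 0 < a) (m : ℤ) : a/2 ≤ |a/2 - m*a| := by
  rcases le_or_gt (m:ℝ) 0 with h | h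
  · rw [abs_of_nonneg (by nlinarith)]; nlinarith
  · have : (1:ℝ) ≤ m := by exact_mod_cast h
    rw [abs_of_nonpos (by nlinarith)]; nlinarith

-- round reduction
lemma round_red (a u : ℝ) (ha : 0 < a) : |u - (round (u/a)) * a| ≤ a/2 := by
  have h := abs_sub_round (u/a)
  have h2 : u - (round (u/a)) * a = (u/a - round (u/a)) * a := by field_simp
  rw [h2, abs_mul, abs_of_pos ha]
  nlinarith [abs_nonneg (u/a - round (u/a))]

theorem stmt11 (a b : ℝ) (ha : 0 < a) (hb : 0 < b)
    (L : AddSubgroup (EuclideanSpace ℝ (Fin 2)))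
    (hL : L = AddSubgroup.closure {pt a 0, pt 0 b})
    (ω : EuclideanSpace ℝ (Fin 2) ⧸ L)
    (hω : ω = QuotientAddGroup.mk (pt (a / 2) (b / 2))) :
    ∀ x : EuclideanSpace ℝ (Fin 2) ⧸ L,
      IsAntipode x (x + ω) ∧ (∀ q, IsAntipode x q → q = x + ω) ∧
      dist x (x + ω) = Real.sqrt (a ^ 2 + b ^ 2) / 2 := by
  set M := Real.sqrt (a ^ 2 + b ^ 2) / 2 with hM
  have hMpos : 0 < M := by
    rw [hM]; positivity
  -- membership characterization
  have memL : ∀ z, z ∈ L ↔ ∃ m n : ℤ, z = pt (m*a) (n*b) := by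
    intro z
    rw [hL, AddSubgroup.mem_closure_pair]
    constructor
    · rintro ⟨m, n, rfl⟩
      exact ⟨m, n, by ext i; fin_cases i <;> simp [pt]⟩
    · rintro ⟨m, n, rfl⟩
      exact ⟨m, n, by ext i; fin_cases i <;> simp [pt]⟩
  have hL0 : (L : Set (EuclideanSpace ℝ (Fin 2))).Nonempty := ⟨0, L.zero_mem⟩
  -- reduction to the fundamental domain
  have reduce : ∀ w : EuclideanSpace ℝ (Fin 2), ∃ u v : ℝ, |u| ≤ a/2 ∧ |v| ≤ b/2 ∧
      w - pt u v ∈ L ∧ ‖(w : EuclideanSpace ℝ (Fin 2) ⧸ L)‖ ≤ Real.sqrt (u^2 + v^2) := by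
    intro w
    set m := round (w 0 / a)
    set n := round (w 1 / b)
    refine ⟨w 0 - m * a, w 1 - n * b, round_red a (w 0) ha, round_red b (w 1) hb, ?_, ?_⟩
    · rw [memL]
      exact ⟨m, n, by ext i; fin_cases i <;> simp [pt] <;> ring⟩
    · rw [QuotientAddGroup.norm_mk]
      have hmem : pt (m*a) (n*b) ∈ (L : Set _) := (memL _).2 ⟨m, n, rfl⟩
      calc Metric.infDist w (L : Set _) ≤ dist w (pt (m*a) (n*b)) :=
            Metric.infDist_le_dist_of_mem hmem
        _ = Real.sqrt ((w 0 - m*a)^2 + (w 1 - n*b)^2) := by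
            rw [dist_eq_norm, norm_eq_sqrt]
            congr 1 <;> simp [pt]
  have sqrt_le : ∀ u v : ℝ, |u| ≤ a/2 → |v| ≤ b/2 → Real.sqrt (u^2+v^2) ≤ M := by
    intro u v hu hv
    rw [hM, ← sqrt_half]
    apply Real.sqrt_le_sqrt
    have h1 : u^2 ≤ (a/2)^2 := by rw [← sq_abs u]; nlinarith [abs_nonneg u]
    have h2 : v^2 ≤ (b/2)^2 := by rw [← sq_abs v]; nlinarith [abs_nonneg v]
    linarith
  -- Claim A : every quotient norm is at most M
  have claimA : ∀ z : EuclideanSpace ℝ (Fin 2) ⧸ L, ‖z‖ ≤ M := by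
    intro z
    obtain ⟨w, rfl⟩ := QuotientAddGroup.mk_surjective z
    obtain ⟨u, v, hu, hv, -, hle⟩ := reduce w
    exact hle.trans (sqrt_le u v hu hv)
  -- Claim B : the norm of ω is exactly M
  have claimB : ‖ω‖ = M := by
    refine le_antisymm (claimA ω) ?_
    rw [hω, QuotientAddGroup.norm_mk]
    refine le_of_not_gt fun hlt => ?_
    obtain ⟨y, hy, hdy⟩ := (Metric.infDist_lt_iff hL0).1 hlt
    obtain ⟨m, n, rfl⟩ := (memL y).1 hy
    have hd : dist (pt (a/2) (b/2)) (pt (m*a) (n*b)) =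
        Real.sqrt ((a/2 - m*a)^2 + (b/2 - n*b)^2) := by
      rw [dist_eq_norm, norm_eq_sqrt]
      congr 1 <;> simp [pt]
    rw [hd] at hdy
    have h1 : (a/2)^2 ≤ (a/2 - m*a)^2 := by
      have := half_le a ha m
      nlinarith [sq_abs (a/2 - m*a), abs_nonneg (a/2 - m*a)]
    have h2 : (b/2)^2 ≤ (b/2 - n*b)^2 := by
      have := half_le b hb n
      nlinarith [sq_abs (b/2 - n*b), abs_nonneg (b/2 - n*b)]
    have : M ≤ Real.sqrt ((a/2 - m*a)^2 + (b/2 - n*b)^2) := by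
      rw [hM, ← sqrt_half]
      apply Real.sqrt_le_sqrt; linarith
    linarith
  -- Claim C : uniqueness of the farthest class
  have claimC : ∀ z : EuclideanSpace ℝ (Fin 2) ⧸ L, ‖z‖ = M → z = ω := by
    intro z hz
    obtain ⟨w, rfl⟩ := QuotientAddGroup.mk_surjective z
    obtain ⟨u, v, hu, hv, hmem, hle⟩ := reduce w
    have heq : Real.sqrt (u^2+v^2) = M :=
      le_antisymm (sqrt_le u v hu hv) (hz ▸ hle)
    have hsq : u^2 + v^2 = (a/2)^2 + (b/2)^2 := by
      have h1 : Real.sqrt (u^2+v^2) = Real.sqrt ((a/2)^2+(b/2)^2) := by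
        rw [heq, hM, sqrt_half]
      have h2 := congrArg (· ^ 2) h1
      simp only [Real.sq_sqrt (by positivity : (0:ℝ) ≤ u^2+v^2),
        Real.sq_sqrt (by positivity : (0:ℝ) ≤ (a/2)^2+(b/2)^2)] at h2
      exact h2
    have h1 : u^2 ≤ (a/2)^2 := by rw [← sq_abs u]; nlinarith [abs_nonneg u]
    have h2 : v^2 ≤ (b/2)^2 := by rw [← sq_abs v]; nlinarith [abs_nonneg v]
    have hu2 : u^2 = (a/2)^2 := by linarith
    have hv2 : v^2 = (b/2)^2 := by linarith
    have habsu : |u| = a/2 := by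
      have h3 := (sq_eq_sq_iff_abs_eq_abs u (a/2)).1 hu2
      rwa [abs_of_pos (half_pos ha)] at h3
    have habsv : |v| = b/2 := by
      have h3 := (sq_eq_sq_iff_abs_eq_abs v (b/2)).1 hv2
      rwa [abs_of_pos (half_pos hb)] at h3
    have hL2 : pt u v - pt (a/2) (b/2) ∈ L := by
      rcases (abs_eq (by linarith : (0:ℝ) ≤ a/2)).1 habsu with rfl | rfl <;>
        rcases (abs_eq (by linarith : (0:ℝ) ≤ b/2)).1 habsv with rfl | rfl
      · exact (memL _).2 ⟨0, 0, by ext i; fin_cases i <;> simp [pt]⟩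
      · exact (memL _).2 ⟨0, -1, by ext i; fin_cases i <;> simp [pt] <;> ring⟩
      · exact (memL _).2 ⟨-1, 0, by ext i; fin_cases i <;> simp [pt] <;> ring⟩
      · exact (memL _).2 ⟨-1, -1, by ext i; fin_cases i <;> simp [pt] <;> ring⟩
    rw [hω, QuotientAddGroup.eq_iff_sub_mem]
    have : w - pt (a/2) (b/2) = (w - pt u v) + (pt u v - pt (a/2) (b/2)) := by abel
    rw [this]
    exact L.add_mem hmem hL2
  -- assemble
  intro x
  have hdist : ∀ r : EuclideanSpace ℝ (Fin 2) ⧸ L, dist x r = ‖r - x‖ := fun r =>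
    dist_eq_norm_sub' x r
  have hdxω : dist x (x + ω) = M := by
    rw [hdist, add_sub_cancel_left, claimB]
  refine ⟨?_, ?_, hdxω⟩
  · intro r
    rw [hdist, hdxω]
    exact claimA _
  · intro q hq
    have h1 : M ≤ dist x q := hdxω ▸ hq (x + ω)
    have h2 : dist x q ≤ M := (hdist q) ▸ claimA (q - x)
    have h3 : ‖q - x‖ = M := by rw [← hdist]; linarith
    have := claimC _ h3
    rw [sub_eq_iff_eq_add'] at this
    exact this
end

section
/- Let a, b > 0, let L be the additive subgroup of the Euclidean plane ℝ² generated by (a, 0) and (0, b), and let T = ℝ²/L be the flat rectangular torus with the quotient norm. Then T is a Steinhaus space: every point x ∈ T has a unique antipode F(x), the map F : T → T satisfies F(F(x)) = x for all x, and F(x) ≠ x for all x. -/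
private lemma sq_half_le_aux (a : ℝ) (m : ℤ) : (a/2)^2 ≤ (a/2 + m*a)^2 := by
  have h0 : (2*m+1) ≠ 0 := by omega
  have h1 : (1:ℤ) ≤ |2*m+1| := Int.one_le_abs h0
  have h2 : (1:ℤ) ≤ (2*m+1)^2 := by nlinarith [sq_abs (2*m+1)]
  have h3 : (1:ℝ) ≤ ((2*m+1 : ℤ) : ℝ)^2 := by exact_mod_cast h2
  push_cast at h3
  nlinarith [sq_nonneg a, mul_le_mul_of_nonneg_left h3 (by positivity : (0:ℝ) ≤ a^2/4)]

private lemma half_bound {a : ℝ} (ha : 0 < a) (x : ℝ) :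
    |x - ((round (x/a) : ℤ) : ℝ) * a| ≤ a/2 := by
  have key : |x/a - ((round (x/a) : ℤ) : ℝ)| ≤ 1/2 := abs_sub_round _
  have heq : x - ((round (x/a) : ℤ) : ℝ)*a = (x/a - ((round (x/a) : ℤ) : ℝ)) * a := by
    field_simp
  rw [heq, abs_mul, abs_of_pos ha]
  nlinarith [abs_nonneg (x/a - ((round (x/a) : ℤ) : ℝ))]

private lemma dist_pt_s12 (x : EuclideanSpace ℝ (Fin 2)) (u v : ℝ) :
    dist x (pt u v) = Real.sqrt ((x 0 - u)^2 + (x 1 - v)^2) := by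
  rw [EuclideanSpace.dist_eq]
  simp [Fin.sum_univ_two, Real.dist_eq, sq_abs, pt]

theorem stmt12 (a b : ℝ) (ha : 0 < a) (hb : 0 < b)
    (L : AddSubgroup (EuclideanSpace ℝ (Fin 2)))
    (hL : L = AddSubgroup.closure {pt a 0, pt 0 b}) :
    ∃ F : (EuclideanSpace ℝ (Fin 2) ⧸ L) → (EuclideanSpace ℝ (Fin 2) ⧸ L),
      (∀ x, IsAntipode x (F x) ∧ ∀ q, IsAntipode x q → q = F x) ∧
      (∀ x, F (F x) = x) ∧ (∀ x, F x ≠ x) := by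
  classical
  set c : EuclideanSpace ℝ (Fin 2) := pt (a/2) (b/2) with hc
  set M : ℝ := Real.sqrt ((a/2)^2 + (b/2)^2) with hM
  have hMpos : 0 < M := Real.sqrt_pos.mpr (by positivity)
  -- membership in L
  have memL : ∀ v : EuclideanSpace ℝ (Fin 2),
      v ∈ L ↔ ∃ m n : ℤ, v = pt ((m:ℝ)*a) ((n:ℝ)*b) := by
    intro v
    rw [hL, AddSubgroup.mem_closure_pair]
    constructor
    · rintro ⟨m, n, rfl⟩
      refine ⟨m, n, ?_⟩
      ext i; fin_cases i
      · show m • a + n • (0:ℝ) = m * a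
        simp [zsmul_eq_mul]
      · show m • (0:ℝ) + n • b = n * b
        simp [zsmul_eq_mul]
    · rintro ⟨m, n, rfl⟩
      refine ⟨m, n, ?_⟩
      ext i; fin_cases i
      · show m • a + n • (0:ℝ) = m * a
        simp [zsmul_eq_mul]
      · show m • (0:ℝ) + n • b = n * b
        simp [zsmul_eq_mul]
  -- upper bound for the quotient norm
  have hub : ∀ v : EuclideanSpace ℝ (Fin 2),
      ‖(v : EuclideanSpace ℝ (Fin 2) ⧸ L)‖ ≤ M := by
    intro v
    rw [QuotientAddGroup.norm_mk]
    set m : ℤ := round (v 0 / a) with hm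
    set n : ℤ := round (v 1 / b) with hn
    have hw : pt ((m:ℝ)*a) ((n:ℝ)*b) ∈ L := (memL _).mpr ⟨m, n, rfl⟩
    refine le_trans (Metric.infDist_le_dist_of_mem hw) ?_
    rw [dist_pt_s12, hM]
    apply Real.sqrt_le_sqrt
    have h0 : |v 0 - (m:ℝ) * a| ≤ a / 2 := half_bound ha (v 0)
    have h1 : |v 1 - (n:ℝ) * b| ≤ b / 2 := half_bound hb (v 1)
    have s0 : (v 0 - m * a)^2 ≤ (a/2)^2 := by
      rw [← sq_abs]; exact pow_le_pow_left₀ (abs_nonneg _) h0 2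
    have s1 : (v 1 - n * b)^2 ≤ (b/2)^2 := by
      rw [← sq_abs]; exact pow_le_pow_left₀ (abs_nonneg _) h1 2
    linarith
  -- norm of the class of c equals M
  have hcM : ‖(c : EuclideanSpace ℝ (Fin 2) ⧸ L)‖ = M := by
    refine le_antisymm (hub c) ?_
    rw [QuotientAddGroup.norm_mk]
    by_contra h
    push_neg at h
    obtain ⟨w, hw, hd⟩ := (Metric.infDist_lt_iff ⟨0, zero_mem L⟩).mp h
    obtain ⟨m, n, rfl⟩ := (memL w).mp hw
    rw [dist_pt_s12, hM] at hd
    have hc0 : c 0 = a/2 := rfl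
    have hc1 : c 1 = b/2 := rfl
    have e0 : (a/2)^2 ≤ (c 0 - m*a)^2 := by
      rw [hc0]
      have := sq_half_le_aux a (-m)
      push_cast at this
      nlinarith [this]
    have e1 : (b/2)^2 ≤ (c 1 - n*b)^2 := by
      rw [hc1]
      have := sq_half_le_aux b (-n)
      push_cast at this
      nlinarith [this]
    have := Real.sqrt_le_sqrt
      (show (a/2)^2 + (b/2)^2 ≤ (c 0 - m*a)^2 + (c 1 - n*b)^2 by linarith)
    linarith
  -- any class of norm M is the class of c
  have huniq : ∀ v : EuclideanSpace ℝ (Fin 2),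
      ‖(v : EuclideanSpace ℝ (Fin 2) ⧸ L)‖ = M →
      (v : EuclideanSpace ℝ (Fin 2) ⧸ L) = (c : EuclideanSpace ℝ (Fin 2) ⧸ L) := by
    intro v hv
    rw [QuotientAddGroup.norm_mk] at hv
    set m : ℤ := round (v 0 / a) with hm
    set n : ℤ := round (v 1 / b) with hn
    have hw : pt ((m:ℝ)*a) ((n:ℝ)*b) ∈ L := (memL _).mpr ⟨m, n, rfl⟩
    have hle : M ≤ dist v (pt ((m:ℝ)*a) ((n:ℝ)*b)) :=
      hv ▸ Metric.infDist_le_dist_of_mem hw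
    rw [dist_pt_s12, hM] at hle
    have h0 : |v 0 - (m:ℝ) * a| ≤ a / 2 := half_bound ha (v 0)
    have h1 : |v 1 - (n:ℝ) * b| ≤ b / 2 := half_bound hb (v 1)
    have s0 : (v 0 - m * a)^2 ≤ (a/2)^2 := by
      rw [← sq_abs]; exact pow_le_pow_left₀ (abs_nonneg _) h0 2
    have s1 : (v 1 - n * b)^2 ≤ (b/2)^2 := by
      rw [← sq_abs]; exact pow_le_pow_left₀ (abs_nonneg _) h1 2
    have hsq : (a/2)^2 + (b/2)^2 ≤ (v 0 - m*a)^2 + (v 1 - n*b)^2 :=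
      (Real.sqrt_le_sqrt_iff (by positivity)).mp hle
    have e0 : (v 0 - m*a)^2 = (a/2)^2 := le_antisymm s0 (by linarith)
    have e1 : (v 1 - n*b)^2 = (b/2)^2 := le_antisymm s1 (by linarith)
    have hv0 : ∃ k : ℤ, v 0 - a/2 = (k:ℝ) * a := by
      have hz : (v 0 - m*a - a/2) * (v 0 - m*a + a/2) = 0 := by linear_combination e0
      rcases mul_eq_zero.mp hz with h | h
      · exact ⟨m, by linarith⟩
      · exact ⟨m - 1, by push_cast; linarith⟩
    have hv1 : ∃ k : ℤ, v 1 - b/2 = (k:ℝ) * b := by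
      have hz : (v 1 - n*b - b/2) * (v 1 - n*b + b/2) = 0 := by linear_combination e1
      rcases mul_eq_zero.mp hz with h | h
      · exact ⟨n, by linarith⟩
      · exact ⟨n - 1, by push_cast; linarith⟩
    obtain ⟨k0, hk0⟩ := hv0
    obtain ⟨k1, hk1⟩ := hv1
    have hvc : v - c ∈ L := by
      refine (memL _).mpr ⟨k0, k1, ?_⟩
      ext i; fin_cases i
      · show v 0 - a/2 = (k0:ℝ) * a
        exact hk0
      · show v 1 - b/2 = (k1:ℝ) * b
        exact hk1
    exact (QuotientAddGroup.eq_iff_sub_mem).mpr hvc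
  -- 2c lies in L
  have h2c : ((c : EuclideanSpace ℝ (Fin 2) ⧸ L) + (c : EuclideanSpace ℝ (Fin 2) ⧸ L)) = 0 := by
    rw [← QuotientAddGroup.mk_add, QuotientAddGroup.eq_zero_iff]
    refine (memL _).mpr ⟨1, 1, ?_⟩
    ext i; fin_cases i
    · show a/2 + a/2 = ((1:ℤ):ℝ) * a
      push_cast; ring
    · show b/2 + b/2 = ((1:ℤ):ℝ) * b
      push_cast; ring
  have hnegc : -(c : EuclideanSpace ℝ (Fin 2) ⧸ L) = (c : EuclideanSpace ℝ (Fin 2) ⧸ L) := by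
    rw [neg_eq_iff_add_eq_zero]
    rw [add_comm] at h2c
    exact h2c
  refine ⟨fun x => x + (c : EuclideanSpace ℝ (Fin 2) ⧸ L),
    fun x => ⟨?_, ?_⟩, fun x => ?_, fun x => ?_⟩
  · -- IsAntipode x (x + c)
    intro r
    have h2 : dist x (x + (c : EuclideanSpace ℝ (Fin 2) ⧸ L)) = M := by
      rw [dist_eq_norm]
      have h3 : x - (x + (c : EuclideanSpace ℝ (Fin 2) ⧸ L)) =
          -(c : EuclideanSpace ℝ (Fin 2) ⧸ L) := by abel
      rw [h3, hnegc, hcM]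
    rw [dist_eq_norm, h2]
    obtain ⟨v, hv⟩ := QuotientAddGroup.mk_surjective (x - r)
    rw [← hv]
    exact hub v
  · -- uniqueness
    intro q hq
    have h2 : dist x (x + (c : EuclideanSpace ℝ (Fin 2) ⧸ L)) = M := by
      rw [dist_eq_norm]
      have h3 : x - (x + (c : EuclideanSpace ℝ (Fin 2) ⧸ L)) =
          -(c : EuclideanSpace ℝ (Fin 2) ⧸ L) := by abel
      rw [h3, hnegc, hcM]
    have hle : M ≤ dist x q := h2 ▸ hq (x + (c : EuclideanSpace ℝ (Fin 2) ⧸ L))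
    obtain ⟨v, hv⟩ := QuotientAddGroup.mk_surjective (x - q)
    have hge : dist x q ≤ M := by
      rw [dist_eq_norm, ← hv]
      exact hub v
    have heq : ‖(v : EuclideanSpace ℝ (Fin 2) ⧸ L)‖ = M := by
      rw [hv, ← dist_eq_norm]
      exact le_antisymm hge hle
    have hxq := huniq v heq
    rw [hv] at hxq
    have hq' : q = x - (c : EuclideanSpace ℝ (Fin 2) ⧸ L) := by
      rw [sub_eq_iff_eq_add] at hxq
      rw [hxq]; abel
    rw [hq', sub_eq_add_neg, hnegc]
  · -- involution
    show x + (c : EuclideanSpace ℝ (Fin 2) ⧸ L) + (c : EuclideanSpace ℝ (Fin 2) ⧸ L) = x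
    rw [add_assoc, h2c, add_zero]
  · -- no fixed point
    intro h
    have hc0 : (c : EuclideanSpace ℝ (Fin 2) ⧸ L) = 0 := by
      have h' := h
      rwa [add_eq_left] at h'
    rw [hc0, norm_zero] at hcM
    exact absurd hcM.symm (ne_of_gt hMpos)
end
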